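/- arXiv:1105.3793 — 5 statements merged into one kernel-verified Lean document; each statement's English description precedes it below -/
import Mathlib

section
/- Let q be a prime power, n ≥ 1, and f : F_q^n → F_q^n an arbitrary function. For k ∈ F_q^n define g_k(x) := f(x) + (k_1 x_1, ..., k_n x_n). If A is uniformly distributed on F_q^n, then the average over k ∈ F_q^n of the collision probability of g_k(A) is at most (1/q^n)·(2 - 1/q)^n. -/
open Finset

/-- Probability mass of value `y` under the pushforward of the uniform
distribution on `α` along `g`. -/
noncomputable def mass {α β : Type*} [Fintype α] [DecidableEq β]
    (g : α → β) (y : β) : ℝ :=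
  (Finset.univ.filter (fun x => g x = y)).card / (Fintype.card α : ℝ)

/-- Collision probability of `g(A)` for `A` uniform on `α`. -/
noncomputable def collProb {α β : Type*} [Fintype α] [Fintype β] [DecidableEq β]
    (g : α → β) : ℝ :=
  ∑ y, (mass g y) ^ 2

/-- Shannon entropy (base 2) of `g(A)` for `A` uniform on `α`.
(Terms with zero mass contribute `0` since `Real.logb 2 0 = 0`.) -/
noncomputable def shannon {α β : Type*} [Fintype α] [Fintype β] [DecidableEq β]
    (g : α → β) : ℝ :=
  -∑ y, mass g y * Real.logb 2 (mass g y)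

/-- Rényi entropy (base 2) of `g(A)` for `A` uniform on `α`. -/
noncomputable def renyi2 {α β : Type*} [Fintype α] [Fintype β] [DecidableEq β]
    (g : α → β) : ℝ :=
  -Real.logb 2 (collProb g)

/-! Write the collision probability of `g_k(A)` as the number of colliding pairs `(x, y)` divided
by `q^(2n)` and exchange the sums over `k` and over pairs. A pair collides exactly for the keys with
`k i * (x i - y i) = f y i - f x i` for all `i`, which pins down `k i` wherever `x i ≠ y i`; so it
collides for at most `q ^ #{i | x i = y i}` keys, and the sum of this over all pairs factors over
the coordinates into `(q * (2q - 1))^n`. -/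

section Collisions

variable {α β : Type*} [Fintype α] [Fintype β] [DecidableEq β]

lemma card_filter_apply_eq_apply_eq_sum_sq (g : α → β) :
    #{p : α × α | g p.1 = g p.2} = ∑ y, #{x | g x = y} ^ 2 := by
  rw [card_eq_sum_card_fiberwise (f := fun p : α × α => g p.1) (t := univ)
    fun _ _ => mem_univ _]
  refine sum_congr rfl fun y _ => ?_
  rw [sq, ← card_product, ← filter_product, filter_filter, univ_product_univ]
  congr 1
  ext p
  simp only [mem_filter, mem_univ, true_and]
  constructor
  · rintro ⟨hp, rfl⟩
    exact ⟨rfl, hp.symm⟩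
  · rintro ⟨h1, h2⟩
    exact ⟨h1.trans h2.symm, h1⟩

lemma collProb_eq_card_div (g : α → β) :
    collProb g = #{p : α × α | g p.1 = g p.2} / (Fintype.card α : ℝ) ^ 2 := by
  simp only [collProb, mass, div_pow, ← sum_div, card_filter_apply_eq_apply_eq_sum_sq]
  push_cast
  rfl

end Collisions

lemma sum_ite_eq_card_else_one {α : Type*} [Fintype α] [DecidableEq α] (a : α) :
    ∑ b : α, (if a = b then (Fintype.card α : ℝ) else 1) = 2 * Fintype.card α - 1 := by
  have hsplit : ∀ b, (if a = b then (Fintype.card α : ℝ) else 1)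
      = 1 + if a = b then (Fintype.card α : ℝ) - 1 else 0 := fun b => by split_ifs <;> ring
  simp only [hsplit, sum_add_distrib, sum_ite_eq, mem_univ, if_true, sum_const, card_univ,
    nsmul_eq_mul, mul_one]
  ring

lemma sum_sum_prod_ite_eq {ι α : Type*} [Fintype ι] [DecidableEq ι] [Fintype α] [DecidableEq α] :
    ∑ x : ι → α, ∑ y : ι → α, ∏ i, (if x i = y i then (Fintype.card α : ℝ) else 1)
      = (Fintype.card α * (2 * Fintype.card α - 1)) ^ Fintype.card ι := by
  have hrow : ∀ x : ι → α, ∑ y : ι → α, ∏ i, (if x i = y i then (Fintype.card α : ℝ) else 1)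
      = (2 * Fintype.card α - 1) ^ Fintype.card ι := fun x => by
    rw [← Fintype.prod_sum fun i b => if x i = b then (Fintype.card α : ℝ) else 1]
    simp only [sum_ite_eq_card_else_one, prod_const, card_univ]
  simp only [hrow, sum_const, card_univ, Fintype.card_fun, nsmul_eq_mul, Nat.cast_pow, mul_pow]

section AffineKeys

variable {F : Type*} [Field F] [Fintype F] [DecidableEq F]

lemma card_filter_add_mul_eq_le_one {a b : F} (hab : a ≠ b) (u v : F) :
    #{c : F | u + c * a = v + c * b} ≤ 1 := by
  refine card_le_one.mpr fun c hc d hd => ?_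
  simp only [mem_filter, mem_univ, true_and] at hc hd
  exact mul_right_cancel₀ (sub_ne_zero.mpr hab) (by linear_combination hc - hd)

variable {ι : Type*} [Fintype ι] [DecidableEq ι]

lemma card_filter_forall_add_mul_eq_le (u v x y : ι → F) :
    #{k : ι → F | ∀ i, u i + k i * x i = v i + k i * y i}
      ≤ ∏ i, if x i = y i then Fintype.card F else 1 := by
  have hpi : ({k : ι → F | ∀ i, u i + k i * x i = v i + k i * y i} : Finset (ι → F))
      = Fintype.piFinset fun i => {c : F | u i + c * x i = v i + c * y i} := by
    ext k
    simp
  rw [hpi, Fintype.card_piFinset]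
  refine prod_le_prod' fun i _ => ?_
  split_ifs with h
  · exact (card_filter_le _ _).trans_eq card_univ
  · exact card_filter_add_mul_eq_le_one h _ _

lemma sum_card_collisions_le (f : (ι → F) → ι → F) :
    ∑ k : ι → F, (#{p : (ι → F) × (ι → F) |
        (fun x i => f x i + k i * x i) p.1 = (fun x i => f x i + k i * x i) p.2} : ℝ)
      ≤ (Fintype.card F * (2 * Fintype.card F - 1)) ^ Fintype.card ι := by
  have hswap : ∑ k : ι → F, (#{p : (ι → F) × (ι → F) |
        (fun x i => f x i + k i * x i) p.1 = (fun x i => f x i + k i * x i) p.2} : ℝ)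
      = ∑ x : ι → F, ∑ y : ι → F,
          (#{k : ι → F | ∀ i, f x i + k i * x i = f y i + k i * y i} : ℝ) := by
    simp only [card_filter, funext_iff, Nat.cast_sum]
    rw [sum_comm, ← univ_product_univ, sum_product]
  rw [hswap, ← sum_sum_prod_ite_eq]
  gcongr with x _ y _
  exact_mod_cast card_filter_forall_add_mul_eq_le _ _ x y

theorem sum_collProb_add_mul_le (f : (ι → F) → ι → F) :
    ∑ k : ι → F, collProb (fun x i => f x i + k i * x i)
      ≤ (2 - 1 / (Fintype.card F : ℝ)) ^ Fintype.card ι := by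
  have hq : (0 : ℝ) < Fintype.card F := by exact_mod_cast Fintype.card_pos
  simp only [collProb_eq_card_div, ← sum_div, Fintype.card_fun, Nat.cast_pow]
  rw [div_le_iff₀ (by positivity)]
  refine (sum_card_collisions_le f).trans_eq ?_
  rw [← pow_mul, mul_comm _ 2, pow_mul, ← mul_pow]
  congr 1
  field_simp

end AffineKeys

theorem stmt0_general (q n : ℕ) (F : Type*) [Field F] [Fintype F] [DecidableEq F]
    (hq : Fintype.card F = q) (f : (Fin n → F) → (Fin n → F)) :
    (1 / (q : ℝ) ^ n) *
        ∑ k : Fin n → F, collProb (fun x i => f x i + k i * x i) ≤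
      (1 / (q : ℝ) ^ n) * (2 - 1 / (q : ℝ)) ^ n := by
  subst hq
  simpa using mul_le_mul_of_nonneg_left (sum_collProb_add_mul_le f)
    (by positivity : (0 : ℝ) ≤ 1 / (Fintype.card F : ℝ) ^ n)

theorem stmt0 (q n : ℕ) (hn : 1 ≤ n) (F : Type*) [Field F] [Fintype F] [DecidableEq F]
    (hq : Fintype.card F = q) (f : (Fin n → F) → (Fin n → F)) :
    (1 / (q : ℝ) ^ n) *
        ∑ k : Fin n → F, collProb (fun x i => f x i + k i * x i) ≤
      (1 / (q : ℝ) ^ n) * (2 - 1 / (q : ℝ)) ^ n :=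
  stmt0_general q n F hq f
end

section
/- Let q be a prime power, n ≥ 1, and f : F_q^n → F_q^n such that for each i, the i-th component f_i(x) depends only on x_i. For k ∈ F_q^n define g_k(x) := f(x) + (k_1 x_1, ..., k_n x_n). If A is uniform on F_q^n, then the average over k ∈ F_q^n of CP(g_k(A)) equals exactly (1/q^n)·(2 - 1/q)^n. -/
open Finset

/-!
Write `CP(g) = #{(x, x') | g x = g x'} / |α|²`. For `g_k x = (h_i (x_i) + k_i x_i)_i` the collision
indicator is a product over coordinates, so summing over `k` factors into a product of
one-dimensional counts of triples `(k, a, b)` with `h a + k a = h b + k b`: for `a = b` all `q`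
slopes `k` collide, for `a ≠ b` exactly one does, giving `q · q + q (q - 1) = q (2q - 1)`.
Dividing `(q (2q - 1))ⁿ` by `q²ⁿ` yields `(2 - 1/q)ⁿ`.
-/

lemma collProb_eq_sum_collisions {α β : Type*} [Fintype α] [Fintype β] [DecidableEq β]
    (g : α → β) :
    collProb g = (∑ x, ∑ x', if g x = g x' then (1 : ℝ) else 0) / (Fintype.card α : ℝ) ^ 2 := by
  have hmass : ∀ y, mass g y = (∑ x, if g x = y then (1 : ℝ) else 0) / Fintype.card α := by
    simp [mass, Finset.sum_boole]
  simp only [collProb, hmass, div_pow, ← Finset.sum_div]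
  congr 1
  simp only [sq, Finset.sum_mul_sum]
  rw [Finset.sum_comm]
  refine Finset.sum_congr rfl fun x _ => ?_
  rw [Finset.sum_comm]
  simp [eq_comm]

lemma sum_sum_sum_prod {ι κ R : Type*} [Fintype ι] [DecidableEq ι] [Fintype κ] [CommSemiring R]
    (φ : ι → κ → κ → κ → R) :
    ∑ k : ι → κ, ∑ x : ι → κ, ∑ x' : ι → κ, ∏ i, φ i (k i) (x i) (x' i) =
      ∏ i, ∑ c, ∑ a, ∑ b, φ i c a b := by
  simp only [Fintype.prod_sum]

lemma sum_ite_add_mul_eq_add_mul {F : Type*} [Field F] [Fintype F] [DecidableEq F]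
    (h : F → F) (a b : F) :
    (∑ k : F, if h a + k * a = h b + k * b then (1 : ℝ) else 0) =
      if a = b then (Fintype.card F : ℝ) else 1 := by
  split_ifs with hab
  · simp [hab]
  · have hline : ∀ k, h a + k * a = h b + k * b ↔ k = (h b - h a) / (a - b) := by
      intro k
      rw [eq_div_iff (sub_ne_zero.mpr hab)]
      constructor <;> intro H <;> linear_combination H
    simp [hline]

lemma sum_sum_sum_ite_add_mul_eq_add_mul {F : Type*} [Field F] [Fintype F] [DecidableEq F]
    (h : F → F) :
    (∑ k : F, ∑ a : F, ∑ b : F, if h a + k * a = h b + k * b then (1 : ℝ) else 0) =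
      Fintype.card F * (2 * Fintype.card F - 1) := by
  have hrow : ∀ a : F, (∑ b : F, if a = b then (Fintype.card F : ℝ) else 1) =
      2 * Fintype.card F - 1 := by
    intro a
    rw [Finset.sum_ite, Finset.filter_eq, Finset.filter_ne]
    simp [Finset.card_erase_of_mem, Nat.cast_pred Fintype.card_pos]
    ring
  rw [Finset.sum_comm]
  simp_rw [Finset.sum_comm (s := (Finset.univ : Finset F)) (t := Finset.univ)
    (f := fun k b => if h _ + k * _ = h b + k * b then (1 : ℝ) else 0),
    sum_ite_add_mul_eq_add_mul, hrow]
  simp only [Finset.sum_const, Finset.card_univ, nsmul_eq_mul]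

theorem sum_collProb_pi_add_mul {ι F : Type*} [Fintype ι] [DecidableEq ι] [Field F] [Fintype F]
    [DecidableEq F] (h : ι → F → F) :
    ∑ k : ι → F, collProb (fun (x : ι → F) i => h i (x i) + k i * x i) =
      (2 - 1 / (Fintype.card F : ℝ)) ^ Fintype.card ι := by
  have collision_indicator_eq_prod : ∀ k x x' : ι → F,
      (if (fun i => h i (x i) + k i * x i) = (fun i => h i (x' i) + k i * x' i)
        then (1 : ℝ) else 0) =
      ∏ i, if h i (x i) + k i * x i = h i (x' i) + k i * x' i then 1 else 0 := by
    intro k x x'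
    rw [Finset.prod_boole]
    simp [funext_iff]
  have hq : (Fintype.card F : ℝ) ≠ 0 := Nat.cast_ne_zero.mpr Fintype.card_ne_zero
  calc ∑ k : ι → F, collProb (fun (x : ι → F) i => h i (x i) + k i * x i)
      = (∑ k : ι → F, ∑ x : ι → F, ∑ x' : ι → F,
          ∏ i, if h i (x i) + k i * x i = h i (x' i) + k i * x' i then (1 : ℝ) else 0) /
          ((Fintype.card F : ℝ) ^ Fintype.card ι) ^ 2 := by
        simp only [collProb_eq_sum_collisions, collision_indicator_eq_prod, Finset.sum_div,
          Fintype.card_fun, Nat.cast_pow]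
    _ = ((Fintype.card F : ℝ) * (2 * Fintype.card F - 1)) ^ Fintype.card ι /
          ((Fintype.card F : ℝ) ^ Fintype.card ι) ^ 2 := by
        rw [sum_sum_sum_prod (fun i c a b => if h i a + c * a = h i b + c * b then (1 : ℝ) else 0)]
        simp only [sum_sum_sum_ite_add_mul_eq_add_mul, Finset.prod_const, Finset.card_univ]
    _ = (2 - 1 / (Fintype.card F : ℝ)) ^ Fintype.card ι := by
        rw [sq, ← mul_pow, ← div_pow]
        congr 1
        field_simp

theorem stmt1_general (q n : ℕ) (F : Type*) [Field F] [Fintype F] [DecidableEq F]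
    (hq : Fintype.card F = q) (f : (Fin n → F) → (Fin n → F))
    (h : Fin n → F → F) (hf : ∀ x i, f x i = h i (x i)) :
    (1 / (q : ℝ) ^ n) *
        ∑ k : Fin n → F, collProb (fun x i => f x i + k i * x i) =
      (1 / (q : ℝ) ^ n) * (2 - 1 / (q : ℝ)) ^ n := by
  simp only [hf, sum_collProb_pi_add_mul, Fintype.card_fin, hq]

theorem stmt1 (q n : ℕ) (hn : 1 ≤ n) (F : Type*) [Field F] [Fintype F] [DecidableEq F]
    (hq : Fintype.card F = q) (f : (Fin n → F) → (Fin n → F))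
    (h : Fin n → F → F) (hf : ∀ x i, f x i = h i (x i)) :
    (1 / (q : ℝ) ^ n) *
        ∑ k : Fin n → F, collProb (fun x i => f x i + k i * x i) =
      (1 / (q : ℝ) ^ n) * (2 - 1 / (q : ℝ)) ^ n :=
  stmt1_general q n F hq f h hf
end

section
/- Let q be a prime power, n ≥ 1, f : F_q^n → F_q^n arbitrary, and fix a, a' ∈ F_q^n with Hamming distance d ≥ 1. Let K be uniform on F_q^n. Then the probability over K that f(a) + K⊙a = f(a') + K⊙a' is at most q^{-d}, where K⊙a := (K_1 a_1, ..., K_n a_n). -/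
/-!
Equality of the two vectors splits into one affine equation
`f a i + k i * a i = f a' i + k i * a' i` per coordinate, so the solution set is a box. At each of
the `d` coordinates with `a i ≠ a' i` the equation has at most one solution `k i`; elsewhere `k i`
is at best unconstrained. Hence at most `q ^ (n - d)` of the `q ^ n` keys satisfy it.
-/

open Finset

lemma card_filter_eq_add_hammingDist {ι β : Type*} [Fintype ι] [DecidableEq β]
    (v v' : ι → β) :
    #{i | v i = v' i} + hammingDist v v' = Fintype.card ι :=
  card_filter_add_card_filter_not _

lemma card_filter_add_mul_eq_add_mul_le_one {R : Type*} [CommRing R] [IsDomain R] [Fintype R]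
    [DecidableEq R] {u u' v v' : R} (hv : v ≠ v') :
    #{x | u + x * v = u' + x * v'} ≤ 1 := by
  refine card_le_one.mpr fun x hx y hy => ?_
  simp only [mem_filter, mem_univ, true_and] at hx hy
  have hx' : x * (v - v') = u' - u := by linear_combination hx
  have hy' : y * (v - v') = u' - u := by linear_combination hy
  exact mul_right_cancel₀ (sub_ne_zero.mpr hv) (hx'.trans hy'.symm)

section
variable {R ι : Type*} [CommRing R] [Fintype R] [DecidableEq R] [Fintype ι] [DecidableEq ι]

lemma filter_affine_eq_eq_piFinset (u u' v v' : ι → R) :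
    ({k | (fun i => u i + k i * v i) = (fun i => u' i + k i * v' i)} : Finset (ι → R)) =
      Fintype.piFinset fun i => {x | u i + x * v i = u' i + x * v' i} := by
  ext k
  simp [funext_iff, Fintype.mem_piFinset]

lemma card_filter_affine_eq_le [IsDomain R] (u u' v v' : ι → R) :
    #({k | (fun i => u i + k i * v i) = (fun i => u' i + k i * v' i)} : Finset (ι → R)) ≤
      Fintype.card R ^ (Fintype.card ι - hammingDist v v') := by
  rw [filter_affine_eq_eq_piFinset, Fintype.card_piFinset]
  calc ∏ i, #{x | u i + x * v i = u' i + x * v' i}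
      ≤ ∏ i, if v i = v' i then Fintype.card R else 1 := by
        gcongr with i
        split_ifs with h
        · exact card_le_univ _
        · exact card_filter_add_mul_eq_add_mul_le_one h
    _ = Fintype.card R ^ #{i | v i = v' i} := by
        rw [prod_ite, prod_const, prod_const_one, mul_one]
    _ = Fintype.card R ^ (Fintype.card ι - hammingDist v v') := by
        rw [← card_filter_eq_add_hammingDist v v', Nat.add_sub_cancel]

end

theorem stmt6_general (q n d : ℕ)
    (F : Type*) [Field F] [Fintype F] [DecidableEq F]
    (hq : Fintype.card F = q) (f : (Fin n → F) → (Fin n → F))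
    (a a' : Fin n → F) (hdist : hammingDist a a' = d) :
    ((Finset.univ.filter
        (fun k : Fin n → F =>
          (fun i => f a i + k i * a i) = (fun i => f a' i + k i * a' i))).card : ℝ) /
        (q : ℝ) ^ n ≤ 1 / (q : ℝ) ^ d := by
  have hcard := card_filter_affine_eq_le (f a) (f a') a a'
  have hdn : d ≤ n := by
    simpa [hdist] using hammingDist_le_card_fintype (x := a) (y := a')
  rw [hq, hdist, Fintype.card_fin] at hcard
  have hq0 : (0 : ℝ) < q := by rw [← hq]; exact_mod_cast Fintype.card_pos
  rw [div_le_div_iff₀ (by positivity) (by positivity), one_mul]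
  calc _ ≤ (q : ℝ) ^ (n - d) * (q : ℝ) ^ d := by gcongr; exact_mod_cast hcard
    _ = (q : ℝ) ^ n := by rw [← pow_add, Nat.sub_add_cancel hdn]

theorem stmt6 (q n d : ℕ) (hn : 1 ≤ n) (hd : 1 ≤ d)
    (F : Type*) [Field F] [Fintype F] [DecidableEq F]
    (hq : Fintype.card F = q) (f : (Fin n → F) → (Fin n → F))
    (a a' : Fin n → F) (hdist : hammingDist a a' = d) :
    ((Finset.univ.filter
        (fun k : Fin n → F =>
          (fun i => f a i + k i * a i) = (fun i => f a' i + k i * a' i))).card : ℝ) /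
        (q : ℝ) ^ n ≤ 1 / (q : ℝ) ^ d :=
  stmt6_general q n d F hq f a a' hdist
end

section
/- Let q be a prime power, A uniform on F_q, and g_k(x) := x^2 + kx. Then (1/q) Σ_{k ∈ F_q} H(g_k(A)) = log_2(q) - (1 - 1/q). -/
open Finset

/-!
Under `x ↦ x ^ 2 + k * x` the fibre through `x` is `{x, -x - k}`, which has two elements unless
`x` is the fixed point `-2x = k` of the involution `x ↦ -x - k`. Hence `g_k(A)` is uniform on
pairs except for at most one singleton, and `H(g_k(A)) = log₂ q - 1 + #{x | -2x = k} / q`.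
Every `x` is the fixed point for exactly one `k`, so averaging over `k` gives
`log₂ q - 1 + 1 / q`.
-/

section UniformPushforward

variable {α β : Type*} [Fintype α] [Fintype β] [DecidableEq β]

theorem shannon_eq_neg_mean_logb_mass (g : α → β) :
    shannon g = -((Fintype.card α : ℝ)⁻¹ * ∑ x, Real.logb 2 (mass g (g x))) := by
  unfold shannon
  congr 1
  rw [← sum_fiberwise' univ g (fun y => Real.logb 2 (mass g y)), mul_sum]
  refine sum_congr rfl fun y _ => ?_
  rw [sum_const, nsmul_eq_mul, mass]
  ring

theorem shannon_eq_logb_card_sub_mean_logb_card_fiber [Nonempty α] (g : α → β) :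
    shannon g = Real.logb 2 (Fintype.card α) -
      (Fintype.card α : ℝ)⁻¹ * ∑ x, Real.logb 2 (#{x' | g x' = g x} : ℕ) := by
  have hcard : (Fintype.card α : ℝ) ≠ 0 := by exact_mod_cast Fintype.card_ne_zero
  have hlog_mass (x : α) : Real.logb 2 (mass g (g x)) =
      Real.logb 2 (#{x' | g x' = g x} : ℕ) - Real.logb 2 (Fintype.card α) := by
    have hfiber : (#{x' | g x' = g x} : ℝ) ≠ 0 := by
      exact_mod_cast (card_pos.2 ⟨x, by simp⟩).ne'
    rw [mass, Real.logb_div hfiber hcard]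
  rw [shannon_eq_neg_mean_logb_mass, sum_congr rfl fun x _ => hlog_mass x, sum_sub_distrib,
    sum_const, card_univ, nsmul_eq_mul]
  field_simp
  ring

end UniformPushforward

section QuadraticMaps

variable {F : Type*} [Field F] [Fintype F] [DecidableEq F]

theorem filter_sq_add_mul_eq (k x : F) :
    ({x' | x' ^ 2 + k * x' = x ^ 2 + k * x} : Finset F) = {x, -x - k} := by
  ext x'
  simp only [mem_filter, mem_univ, true_and, mem_insert, mem_singleton]
  constructor
  · intro h
    have hfactor : (x' - x) * (x' + x + k) = 0 := by linear_combination h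
    rcases mul_eq_zero.1 hfactor with h | h
    · exact Or.inl (sub_eq_zero.1 h)
    · exact Or.inr (by linear_combination h)
  · rintro (rfl | rfl) <;> ring

theorem logb_two_card_fiber_sq_add_mul (k x : F) :
    Real.logb 2 (#{x' | x' ^ 2 + k * x' = x ^ 2 + k * x} : ℕ) =
      1 - if -2 * x = k then 1 else 0 := by
  rw [filter_sq_add_mul_eq]
  by_cases hfix : -2 * x = k
  · rw [if_pos hfix, show -x - k = x by linear_combination hfix]
    simp
  · rw [if_neg hfix, card_pair fun h => hfix (by linear_combination -h)]
    norm_num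

theorem shannon_sq_add_mul (k : F) :
    shannon (fun x : F => x ^ 2 + k * x) =
      Real.logb 2 (Fintype.card F) - 1 + (#{x : F | -2 * x = k} : ℝ) / Fintype.card F := by
  have hcard : (Fintype.card F : ℝ) ≠ 0 := by exact_mod_cast Fintype.card_ne_zero
  rw [shannon_eq_logb_card_sub_mean_logb_card_fiber,
    sum_congr rfl fun x _ => logb_two_card_fiber_sq_add_mul k x, sum_sub_distrib, sum_boole,
    sum_const, card_univ, nsmul_eq_mul]
  field_simp
  ring

theorem sum_card_filter_neg_two_mul_eq :
    ∑ k : F, #{x : F | -2 * x = k} = Fintype.card F :=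
  (card_eq_sum_card_fiberwise fun x _ => mem_univ (-2 * x)).symm

end QuadraticMaps

theorem stmt15 (q : ℕ) (F : Type*) [Field F] [Fintype F] [DecidableEq F]
    (hq : Fintype.card F = q) :
    (1 / (q : ℝ)) * ∑ k : F, shannon (fun x : F => x ^ 2 + k * x) =
      Real.logb 2 (q : ℝ) - (1 - 1 / (q : ℝ)) := by
  subst hq
  have hcard : (Fintype.card F : ℝ) ≠ 0 := by exact_mod_cast Fintype.card_ne_zero
  have hfixed : ∑ k : F, (#{x : F | -2 * x = k} : ℝ) = Fintype.card F := by
    rw [← Nat.cast_sum, sum_card_filter_neg_two_mul_eq]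
  rw [sum_congr rfl fun k _ => shannon_sq_add_mul k, sum_add_distrib, ← sum_div, hfixed,
    sum_const, card_univ, nsmul_eq_mul]
  field_simp
  ring
end

section
/- Let q be an odd prime power, n ≥ 1, f(x) := (x_1^2, ..., x_n^2), g_k(x) := f(x) + (k_1 x_1, ..., k_n x_n), and A uniform on F_q^n. Then for every k ∈ F_q^n, H_2(g_k(A)) = log_2(q^n) - n·log_2(2 - 1/q); in particular the average Rényi entropy attains the lower bound of the main theorem. -/
open Finset

/-! Collisions of a coordinatewise map are coordinatewise collisions, so the collision probability
of `x ↦ (x_i² + k_i x_i)_i` factors over the coordinates. In one coordinate, since `2 ≠ 0`,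
`b² + cb = a² + ca` iff `b = a` or `b = -a - c`: every fiber has two points except the one over
the vertex `a = -c/2`, giving `2q - 1` collision pairs and collision probability `(2 - 1/q)/q`. -/

lemma sum_sq_card_fiber_eq_sum_card_fiber {α β : Type*} [Fintype α] [Fintype β] [DecidableEq β]
    (g : α → β) :
    ∑ y : β, ((univ.filter fun x => g x = y).card : ℝ) ^ 2
      = ∑ a : α, ((univ.filter fun x => g x = g a).card : ℝ) := by
  rw [← sum_fiberwise univ g fun a => ((univ.filter fun x => g x = g a).card : ℝ)]
  refine sum_congr rfl fun y _ => ?_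
  rw [sum_congr rfl fun a ha => by rw [(mem_filter.mp ha).2], sum_const, nsmul_eq_mul, sq]

lemma collProb_eq_sum_card_fiber {α β : Type*} [Fintype α] [Fintype β] [DecidableEq β]
    (g : α → β) :
    collProb g = (∑ a : α, ((univ.filter fun x => g x = g a).card : ℝ)) / (Fintype.card α) ^ 2 := by
  simp only [collProb, mass, div_pow, ← sum_div, sum_sq_card_fiber_eq_sum_card_fiber]

lemma sum_card_fiber_pi {ι α β : Type*} [Fintype ι] [DecidableEq ι] [Fintype α] [DecidableEq β]
    (h : ι → α → β) :
    ∑ a : ι → α, ((univ.filter fun x : ι → α => (fun i => h i (x i)) = fun i => h i (a i)).card : ℝ)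
      = ∏ i, ∑ a : α, ((univ.filter fun b => h i b = h i a).card : ℝ) := by
  have hfiber : ∀ a : ι → α, (univ.filter fun x : ι → α => (fun i => h i (x i)) = fun i => h i (a i))
      = Fintype.piFinset fun i => univ.filter fun b => h i b = h i (a i) := by
    intro a
    ext x
    simp [Fintype.mem_piFinset, funext_iff]
  simp only [hfiber, Fintype.card_piFinset, Nat.cast_prod]
  rw [prod_univ_sum, Fintype.piFinset_univ]

lemma filter_sq_add_mul_eq_s17 {F : Type*} [Field F] [DecidableEq F] [Fintype F] (c a : F) :
    (univ.filter fun b : F => b ^ 2 + c * b = a ^ 2 + c * a) = {a, -a - c} := by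
  ext b
  simp only [mem_filter, mem_univ, true_and, mem_insert, mem_singleton]
  constructor
  · intro h
    have hfactor : (b - a) * (b + a + c) = 0 := by linear_combination h
    rcases mul_eq_zero.mp hfactor with h1 | h1
    · exact Or.inl (sub_eq_zero.mp h1)
    · exact Or.inr (by linear_combination h1)
  · rintro (rfl | rfl) <;> ring

lemma card_filter_sq_add_mul {F : Type*} [Field F] [DecidableEq F] [Fintype F] (c a : F) :
    ((univ.filter fun b : F => b ^ 2 + c * b = a ^ 2 + c * a).card : ℝ)
      = 2 - if 2 * a + c = 0 then 1 else 0 := by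
  rw [filter_sq_add_mul_eq_s17]
  split_ifs with h
  · rw [show -a - c = a by linear_combination -h, insert_eq_of_mem (mem_singleton_self a),
      card_singleton]
    norm_num
  · rw [card_pair fun h' => h (by linear_combination h')]
    norm_num

lemma sum_card_filter_sq_add_mul {F : Type*} [Field F] [DecidableEq F] [Fintype F]
    (h2 : (2 : F) ≠ 0) (c : F) :
    ∑ a : F, ((univ.filter fun b : F => b ^ 2 + c * b = a ^ 2 + c * a).card : ℝ)
      = 2 * Fintype.card F - 1 := by
  have hvertex : (univ.filter fun a : F => 2 * a + c = 0) = {-(c / 2)} := by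
    ext a
    simp only [mem_filter, mem_univ, true_and, mem_singleton]
    constructor
    · intro ha
      field_simp
      linear_combination ha
    · rintro rfl
      field_simp
      ring
  simp only [card_filter_sq_add_mul, sum_sub_distrib, sum_const, card_univ, nsmul_eq_mul,
    ← sum_filter, hvertex, card_singleton]
  ring

lemma two_ne_zero_of_odd_card {F : Type*} [Field F] [Fintype F] (hodd : Odd (Fintype.card F)) :
    (2 : F) ≠ 0 :=
  Ring.two_ne_zero fun hchar =>
    Nat.not_even_iff_odd.mpr hodd (Nat.even_iff.mpr (FiniteField.even_card_of_char_two hchar))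

theorem stmt17_general (q n : ℕ) (F : Type*) [Field F] [Fintype F] [DecidableEq F]
    (hq : Fintype.card F = q) (hodd : Odd q) (k : Fin n → F) :
    renyi2 (fun x : Fin n → F => fun i => x i ^ 2 + k i * x i) =
      Real.logb 2 ((q : ℝ) ^ n) - n * Real.logb 2 (2 - 1 / (q : ℝ)) := by
  subst hq
  have hq : (1 : ℝ) ≤ Fintype.card F := by exact_mod_cast Fintype.card_pos
  have hcoll : collProb (fun x : Fin n → F => fun i => x i ^ 2 + k i * x i)
      = ((2 - 1 / (Fintype.card F : ℝ)) / Fintype.card F) ^ n := by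
    rw [collProb_eq_sum_card_fiber, sum_card_fiber_pi fun i b => b ^ 2 + k i * b]
    simp only [sum_card_filter_sq_add_mul (two_ne_zero_of_odd_card hodd), prod_const, card_univ,
      Fintype.card_fun, Fintype.card_fin, Nat.cast_pow]
    rw [← pow_mul, mul_comm n 2, pow_mul, ← div_pow]
    congr 1
    field_simp
  have h2q : (0 : ℝ) < 2 - 1 / Fintype.card F := by
    have : 1 / (Fintype.card F : ℝ) ≤ 1 := div_le_one_of_le₀ hq (by positivity)
    linarith
  rw [renyi2, hcoll, Real.logb_pow, Real.logb_div h2q.ne' (by positivity), Real.logb_pow]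
  ring

theorem stmt17 (q n : ℕ) (hn : 1 ≤ n) (F : Type*) [Field F] [Fintype F] [DecidableEq F]
    (hq : Fintype.card F = q) (hodd : Odd q) (k : Fin n → F) :
    renyi2 (fun x : Fin n → F => fun i => x i ^ 2 + k i * x i) =
      Real.logb 2 ((q : ℝ) ^ n) - n * Real.logb 2 (2 - 1 / (q : ℝ)) :=
  stmt17_general q n F hq hodd k
end
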